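/- Let C be an LD-set for Q with minorizing constant ε⁻_C and measure λ_C. Then for any probability measure ν on (X,𝒳), any n ≥ 1 and any nonnegative measurable functions g_0,…,g_n on X, E^Q_ν[∏_{i=0}^n g_i(X_i)] ≥ (ε⁻_C)^{n−1} · ν(g_0 · Q(g_1 1_C)) · ∏_{i=2}^n λ_C(g_i 1_C). -/

import Mathlib

open MeasureTheory ProbabilityTheory
open scoped ENNReal

/-- A set `C` is a local Doeblin (LD) set for the kernel `Q`, with minorizing/majorizing
measure `lam` and constants `em, ep`. -/
def IsLDSet {X : Type*} [MeasurableSpace X] (Q : Kernel X X) (C : Set X)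
    (lam : Measure X) (em ep : ℝ) : Prop :=
  MeasurableSet C ∧ 0 < lam C ∧ 0 < em ∧ 0 < ep ∧
    ∀ x ∈ C, ∀ A : Set X, MeasurableSet A →
      ENNReal.ofReal em * lam (A ∩ C) ≤ Q x (A ∩ C) ∧
        Q x (A ∩ C) ≤ ENNReal.ofReal ep * lam (A ∩ C)

/-- The law of the Markov chain with kernel `Q` and initial distribution `ν`, realized as a
measure on `ℕ → X`: `pathMeasure Q ν n` carries the joint law of the first `n+1`
coordinates (coordinates beyond `n` are frozen copies). -/
noncomputable def pathMeasure {X : Type*} [MeasurableSpace X] (Q : Kernel X X)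
    (ν : Measure X) : ℕ → Measure (ℕ → X)
  | 0 => ν.map (fun x _ => x)
  | n + 1 => (pathMeasure Q ν n).bind
      (fun ω => (Q (ω n)).map (fun x' => Function.update ω (n + 1) x'))

/-!
Condition on the path up to time `m ≥ 1` and restrict every `X_i`, `i ≥ 1`, to `C`. On the event
`X_m ∈ C` the minorization `ε⁻_C λ_C ≤ Q(X_m, ·)` on `C` bounds the conditional expectation of
`(g_{m+1} 1_C)(X_{m+1})` below by `ε⁻_C λ_C(g_{m+1} 1_C)`, while off that event the restricted
integrand already vanishes. Induction on `m`, starting from `m = 1` where the expectation is exactly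
`ν(g_0 · Q(g_1 1_C))`, gives the bound.
-/

open Finset

namespace pathMeasure

variable {X : Type*} [MeasurableSpace X] (Q : Kernel X X)

theorem measurable_map_update [IsSFiniteKernel Q] (n : ℕ) :
    Measurable fun ω : ℕ → X => (Q (ω n)).map (Function.update ω (n + 1)) := by
  refine Measure.measurable_of_measurable_coe _ fun s hs => ?_
  simp_rw [Measure.map_apply (measurable_update _) hs]
  exact Kernel.measurable_kernel_prodMk_left
    (κ := Q.comap (fun ω : ℕ → X => ω n) (measurable_pi_apply n)) (measurable_update' hs)

theorem lintegral_zero (ν : Measure X) {F : (ℕ → X) → ℝ≥0∞} (hF : Measurable F) :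
    ∫⁻ ω, F ω ∂(pathMeasure Q ν 0) = ∫⁻ x, F (fun _ => x) ∂ν :=
  lintegral_map hF (measurable_pi_lambda _ fun _ => measurable_id)

theorem lintegral_succ [IsSFiniteKernel Q] (ν : Measure X) (n : ℕ) {F : (ℕ → X) → ℝ≥0∞}
    (hF : Measurable F) :
    ∫⁻ ω, F ω ∂(pathMeasure Q ν (n + 1))
      = ∫⁻ ω, ∫⁻ x, F (Function.update ω (n + 1) x) ∂(Q (ω n)) ∂(pathMeasure Q ν n) := by
  rw [pathMeasure, Measure.lintegral_bind (measurable_map_update Q n).aemeasurable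
    hF.aemeasurable]
  exact lintegral_congr fun ω => lintegral_map hF (measurable_update _)

theorem lintegral_succ_mul [IsSFiniteKernel Q] (ν : Measure X) (n : ℕ)
    {F : (ℕ → X) → ℝ≥0∞} (hF : Measurable F)
    (hF_update : ∀ ω x, F (Function.update ω (n + 1) x) = F ω)
    {f : X → ℝ≥0∞} (hf : Measurable f) :
    ∫⁻ ω, F ω * f (ω (n + 1)) ∂(pathMeasure Q ν (n + 1))
      = ∫⁻ ω, F ω * ∫⁻ x, f x ∂(Q (ω n)) ∂(pathMeasure Q ν n) := by
  rw [lintegral_succ Q ν n (F := fun ω => F ω * f (ω (n + 1))) (by fun_prop)]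
  refine lintegral_congr fun ω => ?_
  simp only [hF_update, Function.update_self]
  exact lintegral_const_mul _ hf

end pathMeasure

theorem IsLDSet.smul_restrict_le {X : Type*} [MeasurableSpace X] {Q : Kernel X X} {C : Set X}
    {lam : Measure X} {em ep : ℝ} (hC : IsLDSet Q C lam em ep) {x : X} (hx : x ∈ C) :
    ENNReal.ofReal em • lam.restrict C ≤ (Q x).restrict C := by
  refine Measure.le_iff.2 fun s hs => ?_
  rw [Measure.smul_apply, Measure.restrict_apply hs, Measure.restrict_apply hs, smul_eq_mul]
  exact (hC.2.2.2.2 x hx s hs).1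

section pathWeight

variable {X : Type*} (C : Set X) (g : ℕ → X → ℝ≥0∞)

noncomputable def pathWeight (m : ℕ) (ω : ℕ → X) : ℝ≥0∞ :=
  g 0 (ω 0) * ∏ i ∈ Ico 1 (m + 1), C.indicator (g i) (ω i)

variable {C g}

theorem measurable_pathWeight [MeasurableSpace X] (hC : MeasurableSet C)
    (hg : ∀ i, Measurable (g i)) (m : ℕ) :
    Measurable (pathWeight C g m) :=
  ((hg 0).comp (measurable_pi_apply 0)).mul <|
    Finset.measurable_prod _ fun i _ => ((hg i).indicator hC).comp (measurable_pi_apply i)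

theorem pathWeight_update {m k : ℕ} (hmk : m < k) (ω : ℕ → X) (x : X) :
    pathWeight C g m (Function.update ω k x) = pathWeight C g m ω := by
  unfold pathWeight
  rw [Function.update_of_ne (by omega)]
  congr 1
  refine prod_congr rfl fun i hi => ?_
  rw [Function.update_of_ne (by simp at hi; omega)]

theorem pathWeight_succ (m : ℕ) (ω : ℕ → X) :
    pathWeight C g (m + 1) ω = pathWeight C g m ω * C.indicator (g (m + 1)) (ω (m + 1)) := by
  rw [pathWeight, pathWeight, prod_Ico_succ_top (by omega), mul_assoc]

theorem pathWeight_eq_zero_of_notMem {m : ℕ} (hm : 1 ≤ m) {ω : ℕ → X} (hω : ω m ∉ C) :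
    pathWeight C g m ω = 0 := by
  obtain ⟨k, rfl⟩ := Nat.exists_eq_add_of_le' hm
  rw [pathWeight_succ, Set.indicator_of_notMem hω, mul_zero]

theorem pathWeight_le_prod (m : ℕ) (ω : ℕ → X) :
    pathWeight C g m ω ≤ ∏ i ∈ range (m + 1), g i (ω i) := by
  rw [pathWeight, range_eq_Ico, prod_eq_prod_Ico_succ_bot (by omega) fun i => g i (ω i)]
  gcongr with i
  exact Set.indicator_le_self _ _ _

end pathWeight

theorem le_lintegral_pathWeight {X : Type*} [MeasurableSpace X] (Q : Kernel X X)
    [IsSFiniteKernel Q] {C : Set X} (hC : MeasurableSet C) {lam : Measure X} {c : ℝ≥0∞}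
    (hmin : ∀ x ∈ C, c • lam.restrict C ≤ (Q x).restrict C) (ν : Measure X)
    {g : ℕ → X → ℝ≥0∞} (hg : ∀ i, Measurable (g i)) {m : ℕ} (hm : 1 ≤ m) :
    c ^ (m - 1) * (∫⁻ x0, g 0 x0 * ∫⁻ x1 in C, g 1 x1 ∂(Q x0) ∂ν) *
        ∏ i ∈ Icc 2 m, ∫⁻ x in C, g i x ∂lam
      ≤ ∫⁻ ω, pathWeight C g m ω ∂(pathMeasure Q ν m) := by
  have hW := measurable_pathWeight hC hg
  have hstep (k : ℕ) : ∫⁻ ω, pathWeight C g (k + 1) ω ∂(pathMeasure Q ν (k + 1))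
      = ∫⁻ ω, pathWeight C g k ω * ∫⁻ x in C, g (k + 1) x ∂(Q (ω k)) ∂(pathMeasure Q ν k) := by
    simp_rw [pathWeight_succ, ← lintegral_indicator hC]
    exact pathMeasure.lintegral_succ_mul Q ν k (hW k) (pathWeight_update (by omega))
      ((hg _).indicator hC)
  induction m, hm using Nat.le_induction with
  | base =>
    rw [hstep, pathMeasure.lintegral_zero Q ν
      (F := fun ω => pathWeight C g 0 ω * ∫⁻ x in C, g 1 x ∂(Q (ω 0)))
      ((hW 0).mul (((hg 1).setLIntegral_kernel hC).comp (measurable_pi_apply 0)))]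
    simp [pathWeight]
  | succ m hm ih =>
    have hmin_integral (x : X) (hx : x ∈ C) :
        c * ∫⁻ y in C, g (m + 1) y ∂lam ≤ ∫⁻ y in C, g (m + 1) y ∂(Q x) := by
      rw [← smul_eq_mul, ← lintegral_smul_measure]
      exact lintegral_mono' (hmin x hx) le_rfl
    have hpointwise (ω : ℕ → X) :
        pathWeight C g m ω * (c * ∫⁻ y in C, g (m + 1) y ∂lam)
          ≤ pathWeight C g m ω * ∫⁻ y in C, g (m + 1) y ∂(Q (ω m)) := by
      by_cases hω : ω m ∈ C
      · exact mul_le_mul_right (hmin_integral _ hω) _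
      · simp [pathWeight_eq_zero_of_notMem hm hω]
    calc c ^ (m + 1 - 1) * (∫⁻ x0, g 0 x0 * ∫⁻ x1 in C, g 1 x1 ∂(Q x0) ∂ν) *
          ∏ i ∈ Icc 2 (m + 1), ∫⁻ x in C, g i x ∂lam
        = (c ^ (m - 1) * (∫⁻ x0, g 0 x0 * ∫⁻ x1 in C, g 1 x1 ∂(Q x0) ∂ν) *
            ∏ i ∈ Icc 2 m, ∫⁻ x in C, g i x ∂lam) * (c * ∫⁻ y in C, g (m + 1) y ∂lam) := by
          rw [prod_Icc_succ_top (by omega), show m + 1 - 1 = m - 1 + 1 by omega, pow_succ]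
          ring
      _ ≤ (∫⁻ ω, pathWeight C g m ω ∂(pathMeasure Q ν m)) *
            (c * ∫⁻ y in C, g (m + 1) y ∂lam) := mul_le_mul_left ih _
      _ = ∫⁻ ω, pathWeight C g m ω * (c * ∫⁻ y in C, g (m + 1) y ∂lam)
            ∂(pathMeasure Q ν m) := (lintegral_mul_const _ (hW m)).symm
      _ ≤ ∫⁻ ω, pathWeight C g (m + 1) ω ∂(pathMeasure Q ν (m + 1)) := by
          rw [hstep]
          exact lintegral_mono hpointwise

theorem forgetting_hmm_stmt3_general {X : Type*} [MeasurableSpace X]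
    (Q : Kernel X X) [IsMarkovKernel Q]
    (C : Set X) (lam : Measure X) (em ep : ℝ) (hC : IsLDSet Q C lam em ep)
    (ν : Measure X)
    (n : ℕ) (hn : 1 ≤ n)
    (g : ℕ → X → ℝ≥0∞) (hg : ∀ i, Measurable (g i)) :
    ENNReal.ofReal em ^ (n - 1) *
        (∫⁻ x0, g 0 x0 * ∫⁻ x1 in C, g 1 x1 ∂(Q x0) ∂ν) *
        ∏ i ∈ Finset.Icc 2 n, ∫⁻ x in C, g i x ∂lam
      ≤ ∫⁻ ω, ∏ i ∈ Finset.range (n + 1), g i (ω i) ∂(pathMeasure Q ν n) :=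
  (le_lintegral_pathWeight Q hC.1 (fun _ => hC.smul_restrict_le) ν hg hn).trans <|
    lintegral_mono (pathWeight_le_prod n)

/-- for an LD-set `C`, any probability measure `ν`, any `n ≥ 1` and any
nonnegative measurable functions `g_0,…,g_n`,
`E^Q_ν[∏_{i=0}^n g_i(X_i)] ≥ (ε⁻_C)^{n−1} ν(g₀ · Q(g₁ 1_C)) ∏_{i=2}^n λ_C(g_i 1_C)`. -/
theorem forgetting_hmm_stmt3 {X : Type*} [MeasurableSpace X]
    (Q : Kernel X X) [IsMarkovKernel Q]
    (C : Set X) (lam : Measure X) (em ep : ℝ) (hC : IsLDSet Q C lam em ep)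
    (ν : Measure X) [IsProbabilityMeasure ν]
    (n : ℕ) (hn : 1 ≤ n)
    (g : ℕ → X → ℝ≥0∞) (hg : ∀ i, Measurable (g i)) :
    ENNReal.ofReal em ^ (n - 1) *
        (∫⁻ x0, g 0 x0 * ∫⁻ x1 in C, g 1 x1 ∂(Q x0) ∂ν) *
        ∏ i ∈ Finset.Icc 2 n, ∫⁻ x in C, g i x ∂lam
      ≤ ∫⁻ ω, ∏ i ∈ Finset.range (n + 1), g i (ω i) ∂(pathMeasure Q ν n) :=
  forgetting_hmm_stmt3_general Q C lam em ep hC ν n hn g hg
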